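/- arXiv:1809.05594 — 2 statements merged into one kernel-verified Lean document; each statement's English description precedes it below -/
import Mathlib

section
/- Let X be a Poisson random variable with parameter θ > 0. Then for every integer k, the total variation distance between the law of X and the law of X + k is at most |k|/√θ. -/
/-!
The total variation distance between two laws on `ℤ` is at most the `ℓ¹` distance of their mass
functions, and the law of `X + k` has the mass function `p` of `X` translated by `k`. The `ℓ¹`
distance between `p` and its translate by `k` is subadditive in `k`, hence at most `|k|` times the
distance for `k = 1`. For `k = 1` the recurrence `θ p(n - 1) = n p(n)` turns that distance into
`E|X - θ| / θ`, which is at most `√(Var X) / θ = 1 / √θ`.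
-/

open MeasureTheory Real

/-- Total variation distance between two measures. -/
noncomputable def tvDist {α : Type*} [MeasurableSpace α] (P Q : Measure α) : ℝ :=
  ⨆ A : {s : Set α // MeasurableSet s}, |(P A.1).toReal - (Q A.1).toReal|

open scoped Nat

section Discrete

variable {α : Type*} [MeasurableSpace α] [Countable α] [MeasurableSingletonClass α]

lemma MeasureTheory.Measure.hasSum_indicator_measureReal_singleton (P : Measure α)
    [IsFiniteMeasure P] (s : Set α) : HasSum (s.indicator fun a ↦ P.real {a}) (P.real s) := by
  have hsum := P.tsum_indicator_apply_singleton s .of_discrete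
  have hfin : ∑' a, s.indicator (fun a ↦ P {a}) a ≠ ⊤ := hsum ▸ measure_ne_top P s
  have hreal := ENNReal.hasSum_toReal hfin
  rw [← ENNReal.tsum_toReal_eq (ENNReal.ne_top_of_tsum_ne_top hfin), hsum] at hreal
  convert hreal using 1
  · ext a
    by_cases ha : a ∈ s <;> simp [ha, measureReal_def]
  · rfl

lemma tvDist_le_tsum_abs_sub (P Q : Measure α) [IsFiniteMeasure P] [IsFiniteMeasure Q] :
    tvDist P Q ≤ ∑' a, |P.real {a} - Q.real {a}| := by
  have hsum (R : Measure α) [IsFiniteMeasure R] (s : Set α) :=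
    R.hasSum_indicator_measureReal_singleton s
  have habs : HasSum (fun a ↦ |P.real {a} - Q.real {a}|) _ :=
    (((hsum P .univ).sub (hsum Q .univ)).summable.abs.congr fun a ↦ by simp).hasSum
  refine ciSup_le fun ⟨A, _⟩ ↦ ?_
  have hA := (hsum P A).sub (hsum Q A)
  have hpt (a : α) : |A.indicator (fun a ↦ P.real {a}) a - A.indicator (fun a ↦ Q.real {a}) a|
      ≤ |P.real {a} - Q.real {a}| := by
    by_cases ha : a ∈ A <;> simp [ha]
  refine abs_le.mpr ⟨?_, hasSum_le (fun a ↦ le_of_abs_le (hpt a)) hA habs⟩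
  simpa [measureReal_def] using hasSum_le (fun a ↦ neg_le_of_abs_le (hpt a)) habs.neg hA

end Discrete

section Translate

variable {G : Type*} [AddCommGroup G]

noncomputable def translateDist (f : G → ℝ) (k : G) : ℝ := ∑' x, |f x - f (x - k)|

variable {f : G → ℝ}

lemma summable_abs_sub_comp_sub (hf : Summable f) (k : G) :
    Summable fun x ↦ |f x - f (x - k)| :=
  (hf.sub ((Equiv.subRight k).summable_iff.mpr hf)).abs

@[simp]
lemma translateDist_zero (f : G → ℝ) : translateDist f 0 = 0 := by
  simp [translateDist]

lemma translateDist_neg (f : G → ℝ) (k : G) : translateDist f (-k) = translateDist f k := by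
  rw [translateDist, ← (Equiv.subRight k).tsum_eq]
  simp [translateDist, abs_sub_comm]

lemma translateDist_add_le (hf : Summable f) (j k : G) :
    translateDist f (j + k) ≤ translateDist f j + translateDist f k := by
  have hshift : ∑' x, |f (x - j) - f (x - j - k)| = translateDist f k :=
    (Equiv.subRight j).tsum_eq fun x ↦ |f x - f (x - k)|
  have hsummable : Summable fun x ↦ |f (x - j) - f (x - j - k)| :=
    (Equiv.subRight j).summable_iff.mpr (summable_abs_sub_comp_sub hf k)
  rw [← hshift, translateDist, translateDist,
    ← (summable_abs_sub_comp_sub hf j).tsum_add hsummable]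
  refine (summable_abs_sub_comp_sub hf _).tsum_le_tsum (fun x ↦ ?_)
    ((summable_abs_sub_comp_sub hf j).add hsummable)
  rw [← sub_sub]
  exact abs_sub_le _ _ _

lemma translateDist_nsmul_le (hf : Summable f) (n : ℕ) (g : G) :
    translateDist f (n • g) ≤ n * translateDist f g := by
  induction n with
  | zero => simp
  | succ n ih =>
    rw [succ_nsmul, Nat.cast_succ, add_one_mul]
    exact (translateDist_add_le hf _ _).trans (by linarith)

lemma translateDist_zsmul_le (hf : Summable f) (k : ℤ) (g : G) :
    translateDist f (k • g) ≤ |k| * translateDist f g := by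
  obtain ⟨n, rfl | rfl⟩ := k.eq_nat_or_neg
  · simpa using translateDist_nsmul_le hf n g
  · simpa [neg_zsmul, translateDist_neg] using translateDist_nsmul_le hf n g

end Translate

noncomputable def poissonMass (θ : ℝ) (n : ℕ) : ℝ := exp (-θ) * θ ^ n / n !

namespace poissonMass

variable {θ : ℝ}

lemma nonneg (hθ : 0 ≤ θ) (n : ℕ) : 0 ≤ poissonMass θ n := by
  unfold poissonMass; positivity

variable (θ) in
lemma hasSum_one : HasSum (poissonMass θ) 1 := by
  have h := (NormedSpace.expSeries_div_hasSum_exp θ).mul_left (exp (-θ))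
  rw [← exp_eq_exp_ℝ, ← exp_add, neg_add_cancel, exp_zero] at h
  unfold poissonMass
  simpa only [mul_div_assoc] using h

variable (θ) in
lemma succ_mul_succ (n : ℕ) : (n + 1) * poissonMass θ (n + 1) = θ * poissonMass θ n := by
  simp only [poissonMass, Nat.factorial_succ, Nat.cast_mul, Nat.cast_succ, pow_succ]
  field_simp

lemma hasSum_natCast_mul {g : ℕ → ℝ} {s : ℝ}
    (h : HasSum (fun n ↦ g n * poissonMass θ n) s) :
    HasSum (fun n ↦ n * g (n - 1) * poissonMass θ n) (θ * s) := by
  rw [← hasSum_nat_add_iff' 1]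
  simp only [Finset.range_one, Finset.sum_singleton, Nat.cast_zero, zero_mul, sub_zero,
    Nat.cast_add, Nat.cast_one, add_tsub_cancel_right]
  have shift (n : ℕ) :
      (n + 1) * g n * poissonMass θ (n + 1) = θ * (g n * poissonMass θ n) := by
    rw [mul_right_comm, succ_mul_succ]
    ring
  simpa only [shift] using h.mul_left θ

variable (θ) in
lemma hasSum_sq_sub_mul : HasSum (fun n : ℕ ↦ (n - θ) ^ 2 * poissonMass θ n) θ := by
  have h₀ := hasSum_one θ
  have h₁ : HasSum (fun n : ℕ ↦ n * poissonMass θ n) θ := by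
    have := hasSum_natCast_mul (g := fun _ ↦ 1) (by simpa only [one_mul] using h₀)
    simpa only [mul_one] using this
  have h₂ : HasSum (fun n ↦ n * ((n - 1 : ℕ) : ℝ) * poissonMass θ n) (θ * θ) :=
    hasSum_natCast_mul h₁
  convert (h₂.add (h₁.mul_left (1 - 2 * θ))).add (h₀.mul_left (θ ^ 2)) using 1
  · ext n
    rcases n with _ | n
    · simp
    · push_cast; ring
  · ring

end poissonMass

lemma tsum_abs_sub_mul_le_sqrt {ι : Type*} {p x : ι → ℝ} {c v : ℝ} (hp : ∀ i, 0 ≤ p i)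
    (h₀ : HasSum p 1) (h₂ : HasSum (fun i ↦ (x i - c) ^ 2 * p i) v) (hv : 0 < v) :
    ∑' i, |x i - c| * p i ≤ √v := by
  have hsv : 0 < √v := sqrt_pos.mpr hv
  have hbound : HasSum (fun i ↦ ((x i - c) ^ 2 * p i + v * p i) / (2 * √v))
      ((v + v * 1) / (2 * √v)) :=
    (h₂.add (h₀.mul_left v)).div_const _
  -- AM–GM `2 √v |y| ≤ y² + v` in place of Cauchy–Schwarz.
  have hpt (i : ι) : |x i - c| * p i ≤ ((x i - c) ^ 2 * p i + v * p i) / (2 * √v) := by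
    rw [le_div_iff₀ (by positivity)]
    have := two_mul_le_add_sq (√v) |x i - c|
    rw [sq_sqrt hv.le, sq_abs] at this
    nlinarith [hp i]
  calc ∑' i, |x i - c| * p i
      ≤ (v + v * 1) / (2 * √v) :=
        hasSum_le hpt (Summable.of_nonneg_of_le (fun i ↦ mul_nonneg (abs_nonneg _) (hp i)) hpt
          hbound.summable).hasSum hbound
    _ = √v := by
        field_simp
        rw [sq_sqrt hv.le]; ring

noncomputable def poissonMassInt (θ : ℝ) : ℤ → ℝ
  | .ofNat n => poissonMass θ n
  | .negSucc _ => 0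

namespace poissonMassInt

variable {θ : ℝ}

@[simp]
lemma natCast (n : ℕ) : poissonMassInt θ n = poissonMass θ n := rfl

lemma eq_zero_of_notMem_range {m : ℤ} (hm : m ∉ Set.range ((↑) : ℕ → ℤ)) :
    poissonMassInt θ m = 0 := by
  cases m with
  | ofNat n => exact absurd ⟨n, rfl⟩ hm
  | negSucc n => rfl

variable (θ) in
lemma summable : Summable (poissonMassInt θ) :=
  (Nat.cast_injective.summable_iff fun _ ↦ eq_zero_of_notMem_range).mp
    (poissonMass.hasSum_one θ).summable

variable (θ) in
lemma mul_natCast_sub_one (n : ℕ) :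
    θ * poissonMassInt θ (n - 1) = n * poissonMass θ n := by
  rcases n with _ | n
  · simp [show poissonMassInt θ (-1) = 0 from rfl]
  · simpa [eq_comm] using poissonMass.succ_mul_succ θ n

lemma translateDist_one_le (hθ : 0 < θ) : translateDist (poissonMassInt θ) 1 ≤ 1 / √θ := by
  have hsupp : (Function.support fun m ↦ |poissonMassInt θ m - poissonMassInt θ (m - 1)|) ⊆
      Set.range ((↑) : ℕ → ℤ) := by
    intro m hm
    cases m with
    | ofNat n => exact ⟨n, rfl⟩
    | negSucc n => exact absurd (by simp [poissonMassInt]) hm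
  have hterm (n : ℕ) : |poissonMassInt θ n - poissonMassInt θ (n - 1)| =
      |(n : ℝ) - θ| * poissonMass θ n / θ := by
    have hpred : poissonMassInt θ (n - 1) = n * poissonMass θ n / θ := by
      rw [← mul_natCast_sub_one, mul_div_cancel_left₀ _ hθ.ne']
    rw [natCast, hpred, abs_sub_comm]
    rw [show n * poissonMass θ n / θ - poissonMass θ n = (n - θ) * poissonMass θ n / θ by
      field_simp, abs_div, abs_mul, abs_of_nonneg (poissonMass.nonneg hθ.le n), abs_of_pos hθ]
  calc translateDist (poissonMassInt θ) 1
      = (∑' n : ℕ, |(n : ℝ) - θ| * poissonMass θ n) / θ := by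
        rw [translateDist, ← Nat.cast_injective.tsum_eq hsupp, ← tsum_div_const]
        exact tsum_congr hterm
    _ ≤ √θ / θ := by
        gcongr
        exact tsum_abs_sub_mul_le_sqrt (poissonMass.nonneg hθ.le) (poissonMass.hasSum_one θ)
          (poissonMass.hasSum_sq_sub_mul θ) hθ
    _ = 1 / √θ := by
        rw [div_eq_div_iff hθ.ne' (sqrt_pos.mpr hθ).ne', one_mul, mul_self_sqrt hθ.le]

end poissonMassInt

section Law

variable {Ω : Type*} [MeasurableSpace Ω] (μ : Measure Ω)

lemma measureReal_map_add_const_singleton {G : Type*} [AddGroup G] [MeasurableSpace G]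
    [MeasurableAdd G] [MeasurableSingletonClass G] {Y : Ω → G} (hY : Measurable Y) (k m : G) :
    (μ.map fun ω ↦ Y ω + k).real {m} = (μ.map Y).real {m - k} := by
  rw [map_measureReal_apply (hY.add_const k) (.singleton m),
    map_measureReal_apply hY (.singleton _)]
  congr 1
  ext ω
  simp [eq_sub_iff_add_eq]

lemma measureReal_map_natCast_singleton {θ : ℝ} (hθ : 0 ≤ θ)
    {X : Ω → ℕ} (hX : Measurable X)
    (hpois : ∀ n : ℕ, μ {ω | X ω = n} = ENNReal.ofReal (poissonMass θ n)) (m : ℤ) :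
    (μ.map fun ω ↦ (X ω : ℤ)).real {m} = poissonMassInt θ m := by
  rw [map_measureReal_apply (by fun_prop) (.singleton _)]
  cases m with
  | ofNat n => simp [measureReal_def, Set.preimage, hpois, poissonMass.nonneg hθ]
  | negSucc _ => simp [Set.preimage, poissonMassInt]

end Law

/-- If `X` is Poisson(θ)-distributed, then the total variation distance between the law of `X`
and the law of `X + k` is at most `|k| / √θ`. -/
theorem tvDist_poisson_shift_le
    {Ω : Type*} [MeasurableSpace Ω] (μ : Measure Ω) [IsProbabilityMeasure μ]
    (θ : ℝ) (hθ : 0 < θ) (X : Ω → ℕ) (hX : Measurable X)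
    (hpois : ∀ n : ℕ, μ {ω | X ω = n} = ENNReal.ofReal (exp (-θ) * θ ^ n / n.factorial))
    (k : ℤ) :
    tvDist (μ.map (fun ω => (X ω : ℤ))) (μ.map (fun ω => (X ω : ℤ) + k))
      ≤ |(k : ℝ)| / Real.sqrt θ := by
  have hlaw := measureReal_map_natCast_singleton μ hθ.le hX hpois
  calc tvDist (μ.map (fun ω => (X ω : ℤ))) (μ.map (fun ω => (X ω : ℤ) + k))
      ≤ ∑' m, |(μ.map (fun ω => (X ω : ℤ))).real {m}
          - (μ.map (fun ω => (X ω : ℤ) + k)).real {m}| :=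
        tvDist_le_tsum_abs_sub _ _
    _ = translateDist (poissonMassInt θ) k := by
        have hX' : Measurable fun ω ↦ (X ω : ℤ) := by fun_prop
        simp_rw [measureReal_map_add_const_singleton μ hX', hlaw, translateDist]
    _ ≤ |k| * translateDist (poissonMassInt θ) 1 := by
        simpa using translateDist_zsmul_le (poissonMassInt.summable θ) k 1
    _ ≤ |k| * (1 / √θ) := by
        gcongr
        exact poissonMassInt.translateDist_one_le hθ
    _ = |(k : ℝ)| / √θ := by
        push_cast
        ring
end

section
/- Let X be a Poisson random variable with parameter θ > 0. Then the total variation distance between the law of X and the law of X + 1 is at most 1/√θ. -/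
open MeasureTheory Real

open scoped Classical


lemma myexp_sum (θ : ℝ) : ∑' n : ℕ, θ ^ n / n.factorial = Real.exp θ := by
  rw [Real.exp_eq_exp_ℝ, NormedSpace.exp_eq_tsum_div]

lemma key1 (θ : ℝ) (n : ℕ) :
    ((n+1 : ℕ) : ℝ) * (θ ^ (n+1) / ((n+1).factorial : ℝ)) = θ * (θ ^ n / n.factorial) := by
  have h1 : ((n+1).factorial : ℝ) = ((n:ℝ)+1) * n.factorial := by
    rw [Nat.factorial_succ]; push_cast; ring
  have h2 : ((n:ℝ)+1) ≠ 0 := by positivity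
  have h3 : (n.factorial : ℝ) ≠ 0 := Nat.cast_ne_zero.2 n.factorial_ne_zero
  rw [h1, pow_succ]
  push_cast
  field_simp

lemma key2 (θ : ℝ) (n : ℕ) :
    ((n+2 : ℕ) : ℝ) * (((n+2 : ℕ) : ℝ) - 1) * (θ ^ (n+2) / ((n+2).factorial : ℝ))
      = θ^2 * (θ ^ n / n.factorial) := by
  have h1 : ((n+2).factorial : ℝ) = ((n:ℝ)+2) * (((n:ℝ)+1) * n.factorial) := by
    rw [Nat.factorial_succ, Nat.factorial_succ]; push_cast; ring
  have h2 : ((n:ℝ)+1) ≠ 0 := by positivity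
  have h2' : ((n:ℝ)+2) ≠ 0 := by positivity
  have h3 : (n.factorial : ℝ) ≠ 0 := Nat.cast_ne_zero.2 n.factorial_ne_zero
  have hp : θ ^ (n+2) = θ ^ n * θ * θ := by ring
  rw [h1, hp]
  push_cast
  field_simp
  ring

lemma mysum1 (θ : ℝ) :
    Summable (fun n : ℕ => (n : ℝ) * (θ ^ n / n.factorial)) ∧
    ∑' n : ℕ, (n : ℝ) * (θ ^ n / n.factorial) = θ * Real.exp θ := by
  have hsum : Summable (fun n : ℕ => (n : ℝ) * (θ ^ n / n.factorial)) := by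
    rw [← summable_nat_add_iff 1]
    exact ((Real.summable_pow_div_factorial θ).mul_left θ).congr fun n => (key1 θ n).symm
  refine ⟨hsum, ?_⟩
  rw [Summable.tsum_eq_zero_add hsum, tsum_congr (key1 θ), tsum_mul_left, myexp_sum]
  simp

lemma mysum2 (θ : ℝ) :
    Summable (fun n : ℕ => (n : ℝ) * ((n:ℝ) - 1) * (θ ^ n / n.factorial)) ∧
    ∑' n : ℕ, (n : ℝ) * ((n:ℝ) - 1) * (θ ^ n / n.factorial) = θ^2 * Real.exp θ := by
  have hsum : Summable (fun n : ℕ => (n : ℝ) * ((n:ℝ)-1) * (θ ^ n / n.factorial)) := by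
    rw [← summable_nat_add_iff 2]
    refine ((Real.summable_pow_div_factorial θ).mul_left (θ^2)).congr fun n => ?_
    exact (key2 θ n).symm
  refine ⟨hsum, ?_⟩
  rw [Summable.tsum_eq_zero_add hsum, Summable.tsum_eq_zero_add ((summable_nat_add_iff 1).2 hsum),
    tsum_congr (fun n => key2 θ n), tsum_mul_left, myexp_sum]
  norm_num

section
variable (θ : ℝ)

noncomputable def pp (θ : ℝ) (n : ℕ) : ℝ := Real.exp (-θ) * (θ ^ n / n.factorial)

lemma pp_nonneg (hθ : 0 < θ) (n : ℕ) : 0 ≤ pp θ n := by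
  unfold pp; positivity

lemma pp_summable : Summable (pp θ) :=
  (Real.summable_pow_div_factorial θ).mul_left _

lemma pp_tsum : ∑' n, pp θ n = 1 := by
  unfold pp
  rw [tsum_mul_left, myexp_sum, ← Real.exp_add]
  simp

lemma pp_sq_summable : Summable (fun n => pp θ n * ((n:ℝ) - θ)^2) := by
  have : ∀ n : ℕ, pp θ n * ((n:ℝ) - θ)^2
      = Real.exp (-θ) * ((n:ℝ) * ((n:ℝ)-1) * (θ^n / n.factorial))
        + (Real.exp (-θ) * (1 - 2*θ)) * ((n:ℝ) * (θ^n/n.factorial))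
        + (Real.exp (-θ) * θ^2) * (θ^n/n.factorial) := by
    intro n; unfold pp; ring
  rw [funext this]
  exact (((mysum2 θ).1.mul_left _).add ((mysum1 θ).1.mul_left _)).add
    ((Real.summable_pow_div_factorial θ).mul_left _)

lemma pp_var : ∑' n, pp θ n * ((n:ℝ) - θ)^2 = θ := by
  have e : ∀ n : ℕ, pp θ n * ((n:ℝ) - θ)^2
      = Real.exp (-θ) * ((n:ℝ) * ((n:ℝ)-1) * (θ^n / n.factorial))
        + ((Real.exp (-θ) * (1 - 2*θ)) * ((n:ℝ) * (θ^n/n.factorial))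
        + (Real.exp (-θ) * θ^2) * (θ^n/n.factorial)) := by
    intro n; unfold pp; ring
  rw [tsum_congr e, Summable.tsum_add ((mysum2 θ).1.mul_left _)
      (((mysum1 θ).1.mul_left _).add ((Real.summable_pow_div_factorial θ).mul_left _)),
    Summable.tsum_add ((mysum1 θ).1.mul_left _) ((Real.summable_pow_div_factorial θ).mul_left _),
    tsum_mul_left, tsum_mul_left, tsum_mul_left, (mysum2 θ).2, (mysum1 θ).2, myexp_sum]
  rw [Real.exp_neg]
  have h := Real.exp_pos θ
  field_simp
  ring

lemma pp_abs_summable (hθ : 0 < θ) : Summable (fun n => pp θ n * |(n:ℝ) - θ|) := by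
  have hb : Summable (fun n : ℕ => Real.exp (-θ) * ((n:ℝ) * (θ^n/n.factorial))
      + θ * pp θ n) :=
    ((mysum1 θ).1.mul_left _).add ((pp_summable θ).mul_left _)
  refine Summable.of_nonneg_of_le (fun n => ?_) (fun n => ?_) hb
  · exact mul_nonneg (pp_nonneg θ hθ n) (abs_nonneg _)
  · have h1 : |(n:ℝ) - θ| ≤ (n:ℝ) + θ := by
      refine (abs_sub _ _).trans ?_
      rw [abs_of_nonneg (Nat.cast_nonneg n), abs_of_nonneg hθ.le]
    have := mul_le_mul_of_nonneg_left h1 (pp_nonneg θ hθ n)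
    refine this.trans_eq ?_
    unfold pp; ring

lemma pp_abs_tsum_le (hθ : 0 < θ) : ∑' n, pp θ n * |(n:ℝ) - θ| ≤ Real.sqrt θ := by
  refine Summable.tsum_le_of_sum_le (pp_abs_summable θ hθ) fun s => ?_
  have step1 : ∑ i ∈ s, pp θ i * |(i:ℝ) - θ|
      = ∑ i ∈ s, Real.sqrt (pp θ i) * (Real.sqrt (pp θ i) * |(i:ℝ) - θ|) := by
    refine Finset.sum_congr rfl fun i _ => ?_
    rw [← mul_assoc, Real.mul_self_sqrt (pp_nonneg θ hθ i)]
  rw [step1]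
  have step2 := Real.sum_mul_le_sqrt_mul_sqrt s (fun i => Real.sqrt (pp θ i))
    (fun i => Real.sqrt (pp θ i) * |(i:ℝ) - θ|)
  refine step2.trans ?_
  have e1 : ∀ i : ℕ, Real.sqrt (pp θ i) ^ 2 = pp θ i := fun i =>
    Real.sq_sqrt (pp_nonneg θ hθ i)
  have e2 : ∀ i : ℕ, (Real.sqrt (pp θ i) * |(i:ℝ) - θ|) ^ 2 = pp θ i * ((i:ℝ) - θ)^2 := by
    intro i
    rw [mul_pow, e1, sq_abs]
  simp only [e1, e2]
  have b1 : ∑ i ∈ s, pp θ i ≤ 1 := by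
    rw [← pp_tsum θ]
    exact Summable.sum_le_tsum s (fun i _ => pp_nonneg θ hθ i) (pp_summable θ)
  have b2 : ∑ i ∈ s, pp θ i * ((i:ℝ) - θ)^2 ≤ θ := by
    exact (Summable.sum_le_tsum s (fun i _ => mul_nonneg (pp_nonneg θ hθ i) (sq_nonneg _))
      (pp_sq_summable θ)).trans_eq (pp_var θ)
  calc Real.sqrt (∑ i ∈ s, pp θ i) * Real.sqrt (∑ i ∈ s, pp θ i * ((i:ℝ)-θ)^2)
      ≤ Real.sqrt 1 * Real.sqrt θ := by
        exact mul_le_mul (Real.sqrt_le_sqrt b1) (Real.sqrt_le_sqrt b2)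
          (Real.sqrt_nonneg _) (Real.sqrt_nonneg _)
    _ = Real.sqrt θ := by rw [Real.sqrt_one, one_mul]

end

lemma map_apply_tsum {Ω : Type*} [MeasurableSpace Ω] (μ : Measure Ω)
    (X : Ω → ℕ) (hX : Measurable X) (p : ℕ → ℝ) (hp : ∀ n, 0 ≤ p n)
    (hpois : ∀ n, μ {ω | X ω = n} = ENNReal.ofReal (p n))
    (g : ℕ → ℤ) (A : Set ℤ) (hA : MeasurableSet A) :
    (μ.map (fun ω => g (X ω)) A).toReal = ∑' n, if g n ∈ A then p n else 0 := by
  classical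
  have hmeas : Measurable (fun ω => g (X ω)) := (measurable_from_top).comp hX
  rw [Measure.map_apply hmeas hA]
  set s : ℕ → Set Ω := fun n => if g n ∈ A then {ω | X ω = n} else ∅ with hs
  have hpre : (fun ω => g (X ω)) ⁻¹' A = ⋃ n, s n := by
    ext ω
    simp only [Set.mem_preimage, Set.mem_iUnion, hs]
    constructor
    · intro h
      exact ⟨X ω, by rw [if_pos h]; rfl⟩
    · rintro ⟨n, hn⟩
      by_cases h : g n ∈ A
      · rw [if_pos h] at hn
        have : X ω = n := hn
        rw [this]; exact h
      · rw [if_neg h] at hn; exact absurd hn (Set.notMem_empty ω)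
  rw [hpre]
  have hsub : ∀ n, s n ⊆ {ω | X ω = n} := by
    intro n
    by_cases h : g n ∈ A
    · rw [hs]; simp only [if_pos h]; exact Set.Subset.rfl
    · rw [hs]; simp only [if_neg h]; exact Set.empty_subset _
  have hdisj : Pairwise (Function.onFun Disjoint s) := by
    intro m n hmn
    refine Set.disjoint_left.2 fun ω hm hn => ?_
    have h1 : X ω = m := hsub m hm
    have h2 : X ω = n := hsub n hn
    exact hmn (h1 ▸ h2)
  have hmeas' : ∀ n, MeasurableSet (s n) := by
    intro n
    by_cases h : g n ∈ A
    · rw [hs]; simp only [if_pos h]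
      exact hX (measurableSet_singleton n)
    · rw [hs]; simp only [if_neg h]; exact MeasurableSet.empty
  rw [measure_iUnion hdisj hmeas']
  have hval : ∀ n, μ (s n) = if g n ∈ A then ENNReal.ofReal (p n) else 0 := by
    intro n
    by_cases h : g n ∈ A
    · rw [hs]; simp only [if_pos h]; exact hpois n
    · rw [hs]; simp only [if_neg h]; exact measure_empty
  rw [tsum_congr hval, ENNReal.tsum_toReal_eq]
  · refine tsum_congr fun n => ?_
    by_cases h : g n ∈ A
    · rw [if_pos h, if_pos h, ENNReal.toReal_ofReal (hp n)]
    · rw [if_neg h, if_neg h, ENNReal.toReal_zero]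
  · intro n
    by_cases h : g n ∈ A
    · rw [if_pos h]; exact ENNReal.ofReal_ne_top
    · rw [if_neg h]; exact ENNReal.zero_ne_top

set_option maxHeartbeats 1000000 in
/-- If `X` is Poisson(θ)-distributed, then the total variation distance between the law of `X`
and the law of `X + 1` is at most `1 / √θ`. -/
theorem tvDist_poisson_shift_one_le
    {Ω : Type*} [MeasurableSpace Ω] (μ : Measure Ω) [IsProbabilityMeasure μ]
    (θ : ℝ) (hθ : 0 < θ) (X : Ω → ℕ) (hX : Measurable X)
    (hpois : ∀ n : ℕ, μ {ω | X ω = n} = ENNReal.ofReal (exp (-θ) * θ ^ n / n.factorial))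
    :
    tvDist (μ.map (fun ω => (X ω : ℤ))) (μ.map (fun ω => (X ω : ℤ) + 1))
      ≤ 1 / Real.sqrt θ := by
  classical
  have hθ' : θ ≠ 0 := hθ.ne'
  have hp0 : ∀ n, 0 ≤ pp θ n := pp_nonneg θ hθ
  have hP : Summable (pp θ) := pp_summable θ
  have hpois' : ∀ n, μ {ω | X ω = n} = ENNReal.ofReal (pp θ n) := by
    intro n; rw [hpois n]; congr 1; rw [pp, mul_div_assoc]
  -- the shifted sequence
  set q : ℕ → ℝ := fun n => Nat.casesOn n 0 (fun m => pp θ m) with hq_def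
  have hq0 : ∀ n, 0 ≤ q n := by
    intro n; cases n with
    | zero => exact le_refl 0
    | succ m => exact hp0 m
  have hQ : Summable q := (summable_nat_add_iff 1).mp (hP : Summable fun n => q (n + 1))
  -- pointwise bound on |p - q|
  have key_pt : ∀ n, |pp θ n - q n| = pp θ n * |(n:ℝ) - θ| / θ := by
    intro n
    cases n with
    | zero =>
      rw [show q 0 = 0 from rfl, sub_zero, abs_of_nonneg (hp0 0)]
      have h0 : |((0:ℕ):ℝ) - θ| = θ := by
        rw [Nat.cast_zero, zero_sub, abs_neg, abs_of_pos hθ]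
      rw [h0, mul_div_assoc, div_self hθ', mul_one]
    | succ n =>
      have e : pp θ n = pp θ (n+1) * (((n:ℝ))+1) / θ := by
        unfold pp
        have hfac : ((n+1).factorial : ℝ) = ((n:ℝ)+1) * n.factorial := by
          rw [Nat.factorial_succ]; push_cast; ring
        have h3 : (n.factorial : ℝ) ≠ 0 := Nat.cast_ne_zero.2 n.factorial_ne_zero
        have h2 : ((n:ℝ)+1) ≠ 0 := by positivity
        rw [hfac, pow_succ]
        field_simp
      rw [show q (n+1) = pp θ n from rfl, e]
      have e2 : pp θ (n+1) - pp θ (n+1) * ((n:ℝ)+1) / θ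
          = pp θ (n+1) * ((θ - ((n:ℝ)+1)) / θ) := by
        field_simp
      rw [e2, abs_mul, abs_of_nonneg (hp0 (n+1)), abs_div, abs_of_pos hθ, abs_sub_comm]
      push_cast
      rw [mul_div_assoc]
  -- the tail bound
  have tail : ∑' n, |pp θ n - q n| ≤ 1 / Real.sqrt θ := by
    rw [tsum_congr key_pt, tsum_div_const]
    have h1 : (∑' n, pp θ n * |(n:ℝ) - θ|) / θ ≤ Real.sqrt θ / θ := by
      gcongr
      exact pp_abs_tsum_le θ hθ
    refine h1.trans_eq ?_
    rw [div_eq_div_iff hθ' (Real.sqrt_pos.2 hθ).ne', one_mul, Real.mul_self_sqrt hθ.le]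
  have hpq : Summable (fun n => |pp θ n - q n|) := (hP.sub hQ).abs
  -- sup over measurable sets
  haveI : Nonempty {s : Set ℤ // MeasurableSet s} := ⟨⟨∅, MeasurableSet.empty⟩⟩
  unfold tvDist
  refine ciSup_le ?_
  rintro ⟨A, hA⟩
  have h1 := map_apply_tsum μ X hX (pp θ) hp0 hpois' (fun n => (n:ℤ)) A hA
  have h2 := map_apply_tsum μ X hX (pp θ) hp0 hpois' (fun n => (n:ℤ)+1) A hA
  beta_reduce at h1 h2
  dsimp only
  rw [h1, h2]
  set a : ℕ → ℝ := fun n => if (n:ℤ) ∈ A then pp θ n else 0 with ha_def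
  set b' : ℕ → ℝ := fun n => if (n:ℤ)+1 ∈ A then pp θ n else 0 with hb'_def
  set b : ℕ → ℝ := fun n => if (n:ℤ) ∈ A then q n else 0 with hb_def
  have ha : Summable a := by
    refine Summable.of_nonneg_of_le (fun n => ?_) (fun n => ?_) hP
    · rw [ha_def]; dsimp only; split
      · exact hp0 n
      · exact le_refl 0
    · rw [ha_def]; dsimp only; split
      · exact le_refl _
      · exact hp0 n
  have hb : Summable b := by
    refine Summable.of_nonneg_of_le (fun n => ?_) (fun n => ?_) hQ
    · rw [hb_def]; dsimp only; split
      · exact hq0 n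
      · exact le_refl 0
    · rw [hb_def]; dsimp only; split
      · exact le_refl _
      · exact hq0 n
  have hshift : ∑' n, b' n = ∑' n, b n := by
    rw [Summable.tsum_eq_zero_add hb]
    have hb0 : b 0 = 0 := by
      rw [hb_def]; dsimp only; split <;> rfl
    have hbs : ∀ n : ℕ, b (n+1) = b' n := by
      intro n
      rw [hb_def, hb'_def]
      dsimp only
      have hc : ((n+1:ℕ):ℤ) = (n:ℤ)+1 := by push_cast; ring
      rw [hc]
    rw [hb0, zero_add, tsum_congr hbs]
  show |(∑' n, a n) - ∑' n, b' n| ≤ 1 / Real.sqrt θ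
  rw [hshift, ← Summable.tsum_sub ha hb]
  have bound : ∀ n, |a n - b n| ≤ |pp θ n - q n| := by
    intro n
    rw [ha_def, hb_def]; dsimp only
    split
    · exact le_refl _
    · rw [sub_zero, abs_zero]; exact abs_nonneg _
  have habs : Summable (fun n => |a n - b n|) :=
    Summable.of_nonneg_of_le (fun n => abs_nonneg _) bound hpq
  have step : |∑' n, (a n - b n)| ≤ ∑' n, |a n - b n| := by
    have habs' : Summable (fun n => ‖a n - b n‖) := by
      simpa only [Real.norm_eq_abs] using habs
    have := norm_tsum_le_tsum_norm habs'
    simpa only [Real.norm_eq_abs] using this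
  calc |∑' n, (a n - b n)| ≤ ∑' n, |a n - b n| := step
    _ ≤ ∑' n, |pp θ n - q n| := Summable.tsum_le_tsum bound habs hpq
    _ ≤ 1 / Real.sqrt θ := tail
end
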